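/- arXiv:0906.2302 — 4 statements merged into one kernel-verified Lean document; each statement's English description precedes it below -/
import Mathlib

section
/- Let H be a separable Hilbert space, q ≥ 2, and {f_n} a complete system in H. Suppose there is a constant C > 0 such that (Σ|a_n|^q)^{1/q} ≤ C·‖Σ a_n f_n‖ for every finite sequence of scalars {a_n}. Then {f_n} is exact, i.e., removing any single element makes the system incomplete. -/
open Finset

theorem stmt7 {H : Type*} [NormedAddCommGroup H] [InnerProductSpace ℂ H]
    [CompleteSpace H] [TopologicalSpace.SeparableSpace H]
    (q : ℝ) (hq : 2 ≤ q) (f : ℕ → H)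
    (hcomplete : Dense (Submodule.span ℂ (Set.range f) : Set H))
    (C : ℝ) (hC : 0 < C)
    (hcontrol : ∀ (s : Finset ℕ) (a : ℕ → ℂ),
      (∑ n ∈ s, ‖a n‖ ^ q) ^ (1 / q) ≤ C * ‖∑ n ∈ s, a n • f n‖) :
    ∀ n₀ : ℕ, ¬ Dense (Submodule.span ℂ (f '' {n | n ≠ n₀}) : Set H) := by
  intro n₀ hdense
  have hq0 : 0 < q := lt_of_lt_of_le (by norm_num) hq
  -- f n₀ is in the closure, so approximated within 1/(2C)
  have hmem : f n₀ ∈ closure (Submodule.span ℂ (f '' {n | n ≠ n₀}) : Set H) := by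
    rw [hdense.closure_eq]; trivial
  rw [Metric.mem_closure_iff] at hmem
  obtain ⟨y, hy, hdist⟩ := hmem (1 / (2 * C)) (by positivity)
  -- rewrite the span as span of a range
  have hset : f '' {n | n ≠ n₀} = Set.range (fun i : {n : ℕ // n ≠ n₀} => f i) := by
    ext x
    constructor
    · rintro ⟨n, hn, rfl⟩; exact ⟨⟨n, hn⟩, rfl⟩
    · rintro ⟨⟨n, hn⟩, rfl⟩; exact ⟨n, hn, rfl⟩
  rw [hset, SetLike.mem_coe] at hy
  rw [Finsupp.mem_span_range_iff_exists_finsupp] at hy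
  obtain ⟨c, hc⟩ := hy
  -- build the finite sequence
  classical
  set a : ℕ → ℂ := fun n => if h : n = n₀ then -1 else c ⟨n, h⟩ with ha
  set t : Finset ℕ := c.support.map ⟨Subtype.val, Subtype.val_injective⟩ with ht
  have hn₀t : n₀ ∉ t := by
    simp only [ht, Finset.mem_map, Function.Embedding.coeFn_mk]
    rintro ⟨⟨n, hn⟩, -, h⟩; exact hn h
  have hsum : ∑ n ∈ insert n₀ t, a n • f n = y - f n₀ := by
    rw [Finset.sum_insert hn₀t]
    have h1 : a n₀ = -1 := by simp [ha]
    have h2 : ∑ n ∈ t, a n • f n = y := by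
      rw [ht, Finset.sum_map]
      rw [← hc]
      rw [Finsupp.sum]
      apply Finset.sum_congr rfl
      rintro ⟨n, hn⟩ -
      simp [ha, hn]
    rw [h1, h2]
    simp [sub_eq_neg_add]
  have hnorm : ‖∑ n ∈ insert n₀ t, a n • f n‖ < 1 / (2 * C) := by
    rw [hsum]
    rwa [dist_eq_norm, ← norm_neg, neg_sub] at hdist
  have hkey := hcontrol (insert n₀ t) a
  -- LHS ≥ 1
  have hone : (1 : ℝ) ≤ (∑ n ∈ insert n₀ t, ‖a n‖ ^ q) ^ (1 / q) := by
    have hterm : (1 : ℝ) ≤ ∑ n ∈ insert n₀ t, ‖a n‖ ^ q := by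
      have h1 : ‖a n₀‖ ^ q = 1 := by
        have : a n₀ = -1 := by simp [ha]
        rw [this]; simp [Real.one_rpow]
      calc (1 : ℝ) = ‖a n₀‖ ^ q := h1.symm
        _ ≤ ∑ n ∈ insert n₀ t, ‖a n‖ ^ q :=
          Finset.single_le_sum (fun i _ => Real.rpow_nonneg (norm_nonneg _) q)
            (Finset.mem_insert_self _ _)
    calc (1 : ℝ) = 1 ^ (1 / q) := (Real.one_rpow _).symm
      _ ≤ _ := Real.rpow_le_rpow zero_le_one hterm (by positivity)
  have : (1 : ℝ) ≤ C * (1 / (2 * C)) := by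
    calc (1 : ℝ) ≤ C * ‖∑ n ∈ insert n₀ t, a n • f n‖ := le_trans hone hkey
      _ ≤ C * (1 / (2 * C)) := by
        apply mul_le_mul_of_nonneg_left (le_of_lt hnorm) (le_of_lt hC)
  have heq : C * (1 / (2 * C)) = 1 / 2 := by
    field_simp
  rw [heq] at this
  linarith
end

section
/- Let H be a separable Hilbert space, q ≥ 2, and {f_n} a complete system such that (Σ|a_n|^q)^{1/q} ≤ C·‖Σ a_n f_n‖ for all finite scalar sequences {a_n}. Then {f_n} is a (C_q)-system: every f ∈ H can be approximated arbitrarily well in norm by finite combinations Σ a_n f_n satisfying (Σ|a_n|^q)^{1/q} ≤ C‖f‖. -/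
open Finset

theorem stmt8 {H : Type*} [NormedAddCommGroup H] [InnerProductSpace ℂ H]
    [CompleteSpace H] [TopologicalSpace.SeparableSpace H]
    (q : ℝ) (hq : 2 ≤ q) (f : ℕ → H)
    (hcomplete : Dense (Submodule.span ℂ (Set.range f) : Set H))
    (C : ℝ) (hC : 0 < C)
    (hcontrol : ∀ (s : Finset ℕ) (a : ℕ → ℂ),
      (∑ n ∈ s, ‖a n‖ ^ q) ^ (1 / q) ≤ C * ‖∑ n ∈ s, a n • f n‖) :
    ∀ x : H, ∀ ε > 0, ∃ (s : Finset ℕ) (a : ℕ → ℂ),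
      ‖x - ∑ n ∈ s, a n • f n‖ < ε ∧ (∑ n ∈ s, ‖a n‖ ^ q) ^ (1 / q) ≤ C * ‖x‖ := by
  intro x ε hε
  have hq0 : (0 : ℝ) < q := by linarith
  by_cases hx : x = 0
  · refine ⟨∅, 0, ?_, ?_⟩
    · simpa [hx] using hε
    · simp only [hx, norm_zero, Pi.zero_apply, Finset.sum_empty, mul_zero]
      rw [Real.zero_rpow (by positivity : (1 : ℝ)/q ≠ 0)]
  · have hxn : 0 < ‖x‖ := norm_pos_iff.mpr hx
    set δ := min (ε / 2) (‖x‖ / 2) with hδdef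
    have hδ0 : 0 < δ := lt_min (by linarith) (by linarith)
    obtain ⟨y, hy, hxy⟩ := Metric.mem_closure_iff.mp (hcomplete x) δ hδ0
    rw [dist_eq_norm] at hxy
    obtain ⟨c, hc⟩ := Finsupp.mem_span_range_iff_exists_finsupp.mp hy
    have hyeq : ∑ n ∈ c.support, c n • f n = y := hc
    have hyn : 0 < ‖y‖ := by
      have h1 : ‖x‖ - ‖y‖ ≤ ‖x - y‖ := norm_sub_norm_le x y
      have h2 : δ ≤ ‖x‖ / 2 := min_le_right _ _
      linarith
    set t : ℝ := ‖x‖ / ‖y‖ with htdef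
    have ht0 : 0 < t := div_pos hxn hyn
    refine ⟨c.support, fun n => (t : ℂ) * c n, ?_, ?_⟩
    · have hsum : ∑ n ∈ c.support, ((t : ℂ) * c n) • f n = (t : ℂ) • y := by
        rw [← hyeq, Finset.smul_sum]
        simp [mul_smul]
      rw [hsum]
      have hdecomp : x - (t : ℂ) • y = (x - y) + ((1 - t : ℝ) : ℂ) • y := by
        push_cast
        module
      have hnorm1 : ‖((1 - t : ℝ) : ℂ) • y‖ = |1 - t| * ‖y‖ := by
        rw [norm_smul, Complex.norm_real, Real.norm_eq_abs]
      have h1t : |1 - t| * ‖y‖ = |‖y‖ - ‖x‖| := by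
        have : 1 - t = (‖y‖ - ‖x‖) / ‖y‖ := by
          field_simp [htdef]
          rw [sub_mul, htdef, div_mul_cancel₀ _ hyn.ne', one_mul]
        rw [this, abs_div, abs_of_pos hyn, div_mul_cancel₀]
        exact hyn.ne'
      have habs : |‖y‖ - ‖x‖| ≤ ‖x - y‖ := by
        rw [abs_sub_comm]
        exact abs_norm_sub_norm_le x y
      calc ‖x - (t : ℂ) • y‖ ≤ ‖x - y‖ + ‖((1 - t : ℝ) : ℂ) • y‖ := by
            rw [hdecomp]; exact norm_add_le _ _
        _ ≤ ‖x - y‖ + ‖x - y‖ := by rw [hnorm1, h1t]; linarith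
        _ < δ + δ := by linarith
        _ ≤ ε := by have := min_le_left (ε / 2) (‖x‖ / 2); linarith
    · have hterm : ∀ n ∈ c.support, ‖(t : ℂ) * c n‖ ^ q = t ^ q * ‖c n‖ ^ q := by
        intro n _
        rw [norm_mul, Complex.norm_real, Real.norm_eq_abs, abs_of_pos ht0,
          Real.mul_rpow ht0.le (norm_nonneg _)]
      rw [Finset.sum_congr rfl hterm, ← Finset.mul_sum,
        Real.mul_rpow (by positivity) (by positivity)]
      have hpow : (t ^ q) ^ ((1 : ℝ) / q) = t := by
        rw [← Real.rpow_mul ht0.le, mul_one_div, div_self hq0.ne', Real.rpow_one]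
      rw [hpow]
      have hbound := hcontrol c.support (fun n => c n)
      rw [hyeq] at hbound
      calc t * (∑ n ∈ c.support, ‖c n‖ ^ q) ^ ((1:ℝ) / q) ≤ t * (C * ‖y‖) := by
            exact mul_le_mul_of_nonneg_left hbound ht0.le
        _ = C * ‖x‖ := by
            rw [htdef]; field_simp
end

section
/- Let H be a separable Hilbert space, q ≥ 2, and let {f_n} be an exact (C_q)-system in H with biorthogonal (dual) system {g_n}. Then there is a constant C > 0 such that (Σ_n |⟨f, g_n⟩|^q)^{1/q} ≤ C‖f‖ for every f ∈ H. -/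
open Finset

theorem auxZ {H : Type*} [NormedAddCommGroup H] [InnerProductSpace ℂ H]
    {q p C₀ : ℝ} (hpq : p.HolderConjugate q) (hC₀ : 0 < C₀) (f g : ℕ → H)
    (hbiorth : ∀ m n : ℕ, (inner ℂ (f m) (g n) : ℂ) = if m = n then 1 else 0)
    (hA : ∀ x : H, ∀ ε > (0:ℝ), ∃ (s : Finset ℕ) (a : ℕ → ℂ),
      ‖x - ∑ n ∈ s, a n • f n‖ < ε ∧ (∑ n ∈ s, ‖a n‖ ^ q) ^ (1/q) ≤ C₀ * ‖x‖)
    (s : Finset ℕ) (b : ℕ → ℂ) :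
    ‖∑ n ∈ s, b n • g n‖ ≤ C₀ * (∑ n ∈ s, ‖b n‖ ^ p) ^ (1/p) := by
  have hq0 : 0 < q := hpq.symm.pos
  have hp0 : 0 < p := hpq.pos
  set z := ∑ n ∈ s, b n • g n with hz
  set B : ℝ := (∑ n ∈ s, ‖b n‖ ^ p) ^ (1/p) with hB
  have hBnn : 0 ≤ B := Real.rpow_nonneg (Finset.sum_nonneg fun i _ =>
    Real.rpow_nonneg (norm_nonneg _) _) _
  have key : ‖z‖ * ‖z‖ ≤ C₀ * B * ‖z‖ := by
    refine le_of_forall_pos_le_add fun ε' hε' => ?_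
    obtain ⟨t, a, hclose, hlq⟩ := hA z (ε' / (‖z‖ + 1)) (by positivity)
    set y := ∑ m ∈ t, a m • f m with hy
    have hterm : ∀ m ∈ t, (inner ℂ (a m • f m) z : ℂ) =
        if m ∈ s then (starRingEnd ℂ) (a m) * b m else 0 := by
      intro m _
      rw [hz, inner_smul_left, inner_sum]
      simp_rw [inner_smul_right, hbiorth m]
      rw [Finset.mul_sum]
      simp only [mul_ite, mul_one, mul_zero, Finset.sum_ite_eq]
    have hyz : (inner ℂ y z : ℂ) = ∑ m ∈ t ∩ s, (starRingEnd ℂ) (a m) * b m := by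
      rw [hy, sum_inner, Finset.sum_congr rfl hterm, Finset.sum_ite_mem]
    have hyz_bound : ‖(inner ℂ y z : ℂ)‖ ≤ C₀ * ‖z‖ * B := by
      rw [hyz]
      calc ‖∑ m ∈ t ∩ s, (starRingEnd ℂ) (a m) * b m‖
          ≤ ∑ m ∈ t ∩ s, ‖a m‖ * ‖b m‖ := by
            refine (norm_sum_le _ _).trans (le_of_eq (Finset.sum_congr rfl fun m _ => ?_))
            rw [norm_mul, RCLike.norm_conj]
        _ ≤ (∑ m ∈ t ∩ s, ‖a m‖ ^ q) ^ (1/q) * (∑ m ∈ t ∩ s, ‖b m‖ ^ p) ^ (1/p) :=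
            Real.inner_le_Lp_mul_Lq_of_nonneg (t ∩ s) hpq.symm
              (fun i _ => norm_nonneg _) (fun i _ => norm_nonneg _)
        _ ≤ (∑ m ∈ t, ‖a m‖ ^ q) ^ (1/q) * (∑ m ∈ s, ‖b m‖ ^ p) ^ (1/p) := by
            have h1 : (∑ m ∈ t ∩ s, ‖a m‖ ^ q) ≤ ∑ m ∈ t, ‖a m‖ ^ q :=
              Finset.sum_le_sum_of_subset_of_nonneg Finset.inter_subset_left
                (fun i _ _ => Real.rpow_nonneg (norm_nonneg _) _)
            have h2 : (∑ m ∈ t ∩ s, ‖b m‖ ^ p) ≤ ∑ m ∈ s, ‖b m‖ ^ p :=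
              Finset.sum_le_sum_of_subset_of_nonneg Finset.inter_subset_right
                (fun i _ _ => Real.rpow_nonneg (norm_nonneg _) _)
            exact mul_le_mul
              (Real.rpow_le_rpow (Finset.sum_nonneg fun i _ =>
                Real.rpow_nonneg (norm_nonneg _) _) h1 (by positivity))
              (Real.rpow_le_rpow (Finset.sum_nonneg fun i _ =>
                Real.rpow_nonneg (norm_nonneg _) _) h2 (by positivity))
              (Real.rpow_nonneg (Finset.sum_nonneg fun i _ =>
                Real.rpow_nonneg (norm_nonneg _) _) _)
              (Real.rpow_nonneg (Finset.sum_nonneg fun i _ =>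
                Real.rpow_nonneg (norm_nonneg _) _) _)
        _ ≤ (C₀ * ‖z‖) * B := by gcongr
        _ = C₀ * ‖z‖ * B := rfl
    have h1 : ‖z‖ * ‖z‖ = RCLike.re (inner ℂ z z : ℂ) :=
      (inner_self_eq_norm_mul_norm (𝕜 := ℂ) z).symm
    have h2 : (inner ℂ z z : ℂ) = inner ℂ y z + inner ℂ (z - y) z := by
      rw [inner_sub_left]; ring
    have h3 : RCLike.re (inner ℂ (z - y) z : ℂ) ≤ ε' / (‖z‖ + 1) * ‖z‖ := by
      calc RCLike.re (inner ℂ (z - y) z : ℂ) ≤ ‖(inner ℂ (z - y) z : ℂ)‖ :=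
            RCLike.re_le_norm _
        _ ≤ ‖z - y‖ * ‖z‖ := norm_inner_le_norm _ _
        _ ≤ ε' / (‖z‖ + 1) * ‖z‖ := by gcongr
    have h4 : RCLike.re (inner ℂ y z : ℂ) ≤ C₀ * ‖z‖ * B :=
      le_trans (RCLike.re_le_norm _) hyz_bound
    have h5 : ε' / (‖z‖ + 1) * ‖z‖ ≤ ε' := by
      rw [div_mul_eq_mul_div, div_le_iff₀ (by positivity)]
      nlinarith [norm_nonneg z, hε'.le]
    calc ‖z‖ * ‖z‖ = RCLike.re (inner ℂ y z : ℂ) + RCLike.re (inner ℂ (z - y) z : ℂ) := by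
          rw [h1, h2, map_add]
      _ ≤ C₀ * ‖z‖ * B + ε' := by linarith [h3.trans h5]
      _ = C₀ * B * ‖z‖ + ε' := by ring
  rcases eq_or_lt_of_le (norm_nonneg z) with h0 | h0
  · rw [← h0]; positivity
  · have := le_of_mul_le_mul_right key h0
    linarith

theorem stmt9 {H : Type*} [NormedAddCommGroup H] [InnerProductSpace ℂ H]
    [CompleteSpace H] [TopologicalSpace.SeparableSpace H]
    (q : ℝ) (hq : 2 ≤ q) (f g : ℕ → H)
    -- `{f n}` is complete
    (hcomplete : Dense (Submodule.span ℂ (Set.range f) : Set H))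
    -- `{f n}` is exact: removing any element destroys completeness
    (hexact : ∀ n₀ : ℕ, ¬ Dense (Submodule.span ℂ (f '' {n | n ≠ n₀}) : Set H))
    -- `{g n}` is the biorthogonal (dual) system of `{f n}`
    (hbiorth : ∀ m n : ℕ, (inner ℂ (f m) (g n) : ℂ) = if m = n then 1 else 0)
    -- `{f n}` is a `(C_q)`-system
    (hCq : ∃ C₀ > (0 : ℝ), ∀ x : H, ∀ ε > (0 : ℝ), ∃ (s : Finset ℕ) (a : ℕ → ℂ),
      ‖x - ∑ n ∈ s, a n • f n‖ < ε ∧ (∑ n ∈ s, ‖a n‖ ^ q) ^ (1 / q) ≤ C₀ * ‖x‖) :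
    ∃ C > (0 : ℝ), ∀ (x : H) (s : Finset ℕ),
      ∑ n ∈ s, ‖(inner ℂ x (g n) : ℂ)‖ ^ q ≤ (C * ‖x‖) ^ q := by
  obtain ⟨C₀, hC₀, hA⟩ := hCq
  have hq1 : (1:ℝ) < q := lt_of_lt_of_le one_lt_two hq
  have hq0 : (0:ℝ) < q := lt_trans one_pos hq1
  have hqp : q.HolderConjugate (Real.conjExponent q) := Real.HolderConjugate.conjExponent hq1
  set p := Real.conjExponent q with hpdef
  have hpq : p.HolderConjugate q := hqp.symm
  refine ⟨C₀, hC₀, fun x s => ?_⟩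
  set c : ℕ → ℂ := fun n => (inner ℂ x (g n) : ℂ) with hc
  set b : ℕ → ℂ := fun n => (starRingEnd ℂ) (c n) * ((‖c n‖ ^ (q-2) : ℝ) : ℂ) with hbdef
  set S : ℝ := ∑ n ∈ s, ‖c n‖ ^ q with hSdef
  have hSnn : 0 ≤ S := Finset.sum_nonneg fun i _ => Real.rpow_nonneg (norm_nonneg _) _
  have hbc : ∀ n, b n * c n = ((‖c n‖ ^ q : ℝ) : ℂ) := by
    intro n
    by_cases h : c n = 0
    · simp [hbdef, h, Real.zero_rpow (ne_of_gt hq0)]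
    · have hcn : 0 < ‖c n‖ := norm_pos_iff.mpr h
      have hr : (‖c n‖ ^ (2:ℕ)) * ‖c n‖ ^ (q-2) = ‖c n‖ ^ q := by
        rw [← Real.rpow_natCast (‖c n‖) 2, ← Real.rpow_add hcn]
        norm_num
      simp only [hbdef]
      rw [← hr, mul_comm ((starRingEnd ℂ) (c n)), mul_assoc,
        mul_comm ((starRingEnd ℂ) (c n)), Complex.mul_conj]
      rw [Complex.normSq_eq_norm_sq]
      push_cast
      ring
  have hnb : ∀ n, ‖b n‖ ^ p = ‖c n‖ ^ q := by
    intro n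
    have hb1 : ‖b n‖ = ‖c n‖ ^ (q - 1) := by
      by_cases h : c n = 0
      · simp [hbdef, h, Real.zero_rpow (by linarith : q - 1 ≠ 0)]
      · have hcn : 0 < ‖c n‖ := norm_pos_iff.mpr h
        simp only [hbdef]
        simp only [norm_mul, RCLike.norm_conj, Complex.norm_real,
          Real.norm_eq_abs, abs_of_nonneg (Real.rpow_nonneg (norm_nonneg (c n)) _)]
        rw [show ‖c n‖ * ‖c n‖ ^ (q-2) = ‖c n‖ ^ (1:ℝ) * ‖c n‖ ^ (q-2) by
          rw [Real.rpow_one], ← Real.rpow_add hcn]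
        congr 1
        ring
    rw [hb1, ← Real.rpow_mul (norm_nonneg _), hqp.sub_one_mul_conj]
  -- pairing identity
  set z : H := ∑ n ∈ s, b n • g n with hzdef
  have hSx : ((S : ℝ) : ℂ) = inner ℂ x z := by
    rw [hzdef, inner_sum]
    simp_rw [inner_smul_right]
    rw [hSdef]
    push_cast
    exact Finset.sum_congr rfl fun n _ => by rw [← hbc n]
  have hzB : ‖z‖ ≤ C₀ * S ^ (1/p) := by
    have := auxZ hpq hC₀ f g hbiorth hA s b
    rw [← hzdef] at this
    have hsum : ∑ n ∈ s, ‖b n‖ ^ p = S := Finset.sum_congr rfl fun n _ => hnb n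
    rwa [hsum] at this
  have hS : S ≤ C₀ * ‖x‖ * S ^ (1/p) := by
    calc S = ‖((S:ℝ) : ℂ)‖ := by rw [Complex.norm_real, Real.norm_of_nonneg hSnn]
      _ = ‖(inner ℂ x z : ℂ)‖ := by rw [hSx]
      _ ≤ ‖x‖ * ‖z‖ := norm_inner_le_norm _ _
      _ ≤ ‖x‖ * (C₀ * S ^ (1/p)) := by gcongr
      _ = C₀ * ‖x‖ * S ^ (1/p) := by ring
  -- conclude
  rcases eq_or_lt_of_le hSnn with h0 | h0
  · calc ∑ n ∈ s, ‖(inner ℂ x (g n) : ℂ)‖ ^ q = S := rfl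
      _ ≤ (C₀ * ‖x‖) ^ q := by
        rw [← h0]; exact Real.rpow_nonneg (by positivity) _
  · have hfrac : S ^ (1/q) ≤ C₀ * ‖x‖ := by
      have hsplit : S = S ^ (1/p) * S ^ (1/q) := by
        rw [← Real.rpow_add h0]
        rw [show 1/p + 1/q = 1 by
          rw [one_div, one_div]; exact hpq.inv_add_inv_eq_one]
        exact (Real.rpow_one S).symm
      have hppos : 0 < S ^ (1/p) := Real.rpow_pos_of_pos h0 _
      have this2 : S ^ (1/p) * S ^ (1/q) ≤ C₀ * ‖x‖ * S ^ (1/p) := by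
        rw [← hsplit]; exact hS
      have h6 : S ^ (1/p) * S ^ (1/q) ≤ S ^ (1/p) * (C₀ * ‖x‖) := by
        calc S ^ (1/p) * S ^ (1/q) ≤ C₀ * ‖x‖ * S ^ (1/p) := this2
          _ = S ^ (1/p) * (C₀ * ‖x‖) := by ring
      exact le_of_mul_le_mul_left h6 hppos
    calc ∑ n ∈ s, ‖(inner ℂ x (g n) : ℂ)‖ ^ q = S := rfl
      _ = (S ^ (1/q)) ^ q := by
        rw [← Real.rpow_mul hSnn, one_div, inv_mul_cancel₀ (ne_of_gt hq0), Real.rpow_one]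
      _ ≤ (C₀ * ‖x‖) ^ q := Real.rpow_le_rpow (Real.rpow_nonneg hSnn _) hfrac hq0.le
end

section
/- Fix a > 0, and for α, β, γ > 0 define f_{α,β,γ}(x,y) = (x^{α/γ} + |y|^{β/γ})^γ for x ≥ 0 and ((−a x)^{α/γ} + |y|^{β/γ})^γ for x < 0. If k ∈ ℕ and 0 < γ < min{α/k, β/k, 1}, then f_{α,β,γ} is k times continuously differentiable on ℝ² \ {(0,0)}, and for x > 0 its k-th partial derivative in x equals Σ_{m=1}^{k} C_{m,k} (x^{α/γ} + |y|^{β/γ})^{γ−m} x^{mα/γ − k} for constants C_{m,k} independent of (x,y). -/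
open Finset
open Real Filter

/-- The function `f_{α,β,γ}` (with parameter `a > 0`):
`(x^{α/γ} + |y|^{β/γ})^γ` for `x ≥ 0` and `((−ax)^{α/γ} + |y|^{β/γ})^γ` for `x < 0`. -/
noncomputable def fabc (a α β γ : ℝ) : ℝ × ℝ → ℝ := fun p =>
  if 0 ≤ p.1 then (p.1 ^ (α / γ) + |p.2| ^ (β / γ)) ^ γ
  else ((-a * p.1) ^ (α / γ) + |p.2| ^ (β / γ)) ^ γ

/-- Piecewise power function. -/
noncomputable def pw (c₁ c₂ q : ℝ) : ℝ → ℝ := fun x =>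
  if 0 ≤ x then c₁ * x ^ q else c₂ * (-x) ^ q

lemma pw_nonneg {c₁ c₂ q : ℝ} (h₁ : 0 ≤ c₁) (h₂ : 0 ≤ c₂) (x : ℝ) : 0 ≤ pw c₁ c₂ q x := by
  unfold pw; split_ifs with h
  · exact mul_nonneg h₁ (Real.rpow_nonneg h q)
  · exact mul_nonneg h₂ (Real.rpow_nonneg (by simp at h; linarith) q)

lemma pw_pos {c₁ c₂ q : ℝ} (h₁ : 0 < c₁) (h₂ : 0 < c₂) {x : ℝ} (hx : x ≠ 0) :
    0 < pw c₁ c₂ q x := by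
  unfold pw; split_ifs with h
  · exact mul_pos h₁ (Real.rpow_pos_of_pos (lt_of_le_of_ne h (Ne.symm hx)) q)
  · exact mul_pos h₂ (Real.rpow_pos_of_pos (by linarith [lt_of_not_ge h]) q)

lemma pw_zero {c₁ c₂ q : ℝ} (hq : 0 < q) : pw c₁ c₂ q 0 = 0 := by
  simp [pw, Real.zero_rpow hq.ne']

lemma pw_abs_le (c₁ c₂ q : ℝ) (x : ℝ) :
    |pw c₁ c₂ q x| ≤ (|c₁| + |c₂|) * |x| ^ q := by
  unfold pw; split_ifs with h
  · rw [abs_mul, abs_rpow_of_nonneg h]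
    have : 0 ≤ |x| ^ q := Real.rpow_nonneg (abs_nonneg x) q
    nlinarith [abs_nonneg c₂]
  · rw [abs_mul, abs_rpow_of_nonneg (by linarith [lt_of_not_ge h] : (0:ℝ) ≤ -x), abs_neg]
    have : 0 ≤ |x| ^ q := Real.rpow_nonneg (abs_nonneg x) q
    nlinarith [abs_nonneg c₁]

lemma tendsto_pw_zero (c₁ c₂ q : ℝ) (hq : 0 < q) :
    Filter.Tendsto (pw c₁ c₂ q) (nhds 0) (nhds 0) := by
  apply squeeze_zero_norm (pw_abs_le c₁ c₂ q)
  have h1 : ContinuousAt (fun x : ℝ => (|c₁| + |c₂|) * |x| ^ q) 0 := by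
    apply ContinuousAt.mul continuousAt_const
    have habs : ContinuousAt (fun x : ℝ => |x|) 0 := continuous_abs.continuousAt
    have : ContinuousAt (fun t : ℝ => t ^ q) (|(0:ℝ)|) := by
      simpa using Real.continuousAt_rpow_const 0 q (Or.inr hq.le)
    exact this.comp habs
  have := h1.tendsto
  simpa [Real.zero_rpow hq.ne'] using this

lemma pw_continuous (c₁ c₂ q : ℝ) (hq : 0 < q) : Continuous (pw c₁ c₂ q) := by
  rw [continuous_iff_continuousAt]
  intro x
  rcases lt_trichotomy x 0 with hx | rfl | hx
  · have : ContinuousAt (fun x : ℝ => c₂ * (-x) ^ q) x := by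
      apply continuousAt_const.mul
      have h1 : ContinuousAt (fun t : ℝ => t ^ q) (-x) :=
        Real.continuousAt_rpow_const (-x) q (Or.inl (by linarith))
      exact h1.comp (continuous_neg.continuousAt)
    apply this.congr
    filter_upwards [eventually_lt_nhds hx] with y hy
    simp [pw, not_le.mpr hy]
  · unfold ContinuousAt
    rw [pw_zero hq]
    exact tendsto_pw_zero c₁ c₂ q hq
  · have : ContinuousAt (fun x : ℝ => c₁ * x ^ q) x := by
      apply continuousAt_const.mul
      exact Real.continuousAt_rpow_const x q (Or.inl hx.ne')
    apply this.congr
    filter_upwards [eventually_gt_nhds hx] with y hy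
    simp [pw, hy.le]

lemma pw_hasDerivAt (c₁ c₂ q : ℝ) (hq : 1 < q) (x : ℝ) :
    HasDerivAt (pw c₁ c₂ q) (pw (c₁ * q) (-(c₂ * q)) (q - 1) x) x := by
  rcases lt_trichotomy x 0 with hx | rfl | hx
  · have h1 : HasDerivAt (fun t : ℝ => t ^ q) (q * (-x) ^ (q - 1)) (-x) :=
      Real.hasDerivAt_rpow_const (Or.inl (by linarith))
    have h2 : HasDerivAt (fun y : ℝ => (-y) ^ q) (q * (-x) ^ (q - 1) * (-1)) x :=
      h1.comp x (hasDerivAt_neg x)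
    have h3 : HasDerivAt (fun y : ℝ => c₂ * (-y) ^ q) (c₂ * (q * (-x) ^ (q - 1) * (-1))) x :=
      h2.const_mul c₂
    have h4 : (pw (c₁ * q) (-(c₂ * q)) (q - 1) x) = c₂ * (q * (-x) ^ (q - 1) * (-1)) := by
      simp [pw, not_le.mpr hx]; ring
    rw [h4]
    apply h3.congr_of_eventuallyEq
    filter_upwards [eventually_lt_nhds hx] with y hy
    simp [pw, not_le.mpr hy]
  · rw [hasDerivAt_iff_tendsto_slope]
    have hval : pw (c₁ * q) (-(c₂ * q)) (q - 1) 0 = 0 := pw_zero (by linarith)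
    rw [hval]
    have hslope : ∀ y : ℝ, y ≠ 0 → slope (pw c₁ c₂ q) 0 y = pw c₁ (-c₂) (q - 1) y := by
      intro y hy
      rw [slope_def_field, pw_zero (by linarith : (0:ℝ) < q)]
      rcases lt_or_gt_of_ne hy with h | h
      · simp only [pw, not_le.mpr h, if_false, sub_zero, sub_zero]
        rw [div_eq_iff hy]
        have : (-y) ^ q = (-y) ^ (q - 1) * (-y) := by
          rw [← Real.rpow_add_one (by linarith : (-y) ≠ 0)]; ring_nf
        rw [this]; ring
      · simp only [pw, h.le, if_true, sub_zero, sub_zero]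
        rw [div_eq_iff hy]
        have : y ^ q = y ^ (q - 1) * y := by
          rw [← Real.rpow_add_one (by linarith : y ≠ 0)]; ring_nf
        rw [this]; ring
    have := (tendsto_pw_zero c₁ (-c₂) (q - 1) (by linarith)).mono_left
      (nhdsWithin_le_nhds (s := {(0:ℝ)}ᶜ))
    apply this.congr'
    filter_upwards [self_mem_nhdsWithin] with y hy
    exact (hslope y hy).symm
  · have h1 : HasDerivAt (fun t : ℝ => t ^ q) (q * x ^ (q - 1)) x :=
      Real.hasDerivAt_rpow_const (Or.inl hx.ne')
    have h3 : HasDerivAt (fun y : ℝ => c₁ * y ^ q) (c₁ * (q * x ^ (q - 1))) x :=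
      h1.const_mul c₁
    have h4 : (pw (c₁ * q) (-(c₂ * q)) (q - 1) x) = c₁ * (q * x ^ (q - 1)) := by
      simp [pw, hx.le]; ring
    rw [h4]
    apply h3.congr_of_eventuallyEq
    filter_upwards [eventually_gt_nhds hx] with y hy
    simp [pw, hy.le]

lemma pw_contDiff : ∀ (k : ℕ) (c₁ c₂ q : ℝ), (k : ℝ) < q → ContDiff ℝ k (pw c₁ c₂ q) := by
  intro k
  induction k with
  | zero =>
    intro c₁ c₂ q hq
    rw [show ((0:ℕ) : WithTop ℕ∞) = 0 from rfl, contDiff_zero]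
    exact pw_continuous c₁ c₂ q (by exact_mod_cast hq)
  | succ n ih =>
    intro c₁ c₂ q hq
    have hq1 : 1 < q := by
      have : (0 : ℝ) ≤ (n : ℝ) := Nat.cast_nonneg n
      push_cast at hq; linarith
    have hd := pw_hasDerivAt c₁ c₂ q hq1
    have hcast : ((n + 1 : ℕ) : WithTop ℕ∞) = (n : WithTop ℕ∞) + 1 := by push_cast; rfl
    rw [hcast, contDiff_succ_iff_deriv]
    refine ⟨fun x => (hd x).differentiableAt, by simp, ?_⟩
    have : deriv (pw c₁ c₂ q) = pw (c₁ * q) (-(c₂ * q)) (q - 1) :=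
      funext fun x => (hd x).deriv
    rw [this]
    apply ih
    push_cast at hq ⊢; linarith

lemma pw_one_one (r : ℝ) (y : ℝ) : pw 1 1 r y = |y| ^ r := by
  unfold pw; split_ifs with h
  · rw [abs_of_nonneg h, one_mul]
  · rw [abs_of_neg (not_le.mp h), one_mul]

lemma fabc_eq (a α β γ : ℝ) (ha : 0 < a) :
    fabc a α β γ = fun p => (pw 1 (a ^ (α / γ)) (α / γ) p.1 + pw 1 1 (β / γ) p.2) ^ γ := by
  funext p
  rw [pw_one_one]
  unfold fabc pw
  split_ifs with h
  · rw [one_mul]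
  · have hx : (0:ℝ) < -p.1 := by linarith [not_le.mp h]
    rw [show -a * p.1 = a * (-p.1) by ring, Real.mul_rpow ha.le hx.le]

lemma part1 (a α β γ : ℝ) (ha : 0 < a) (k : ℕ) (hqa : (k : ℝ) < α / γ) (hqb : (k : ℝ) < β / γ) :
    ContDiffOn ℝ k (fabc a α β γ) ({((0 : ℝ), (0 : ℝ))}ᶜ) := by
  intro p hp
  apply ContDiffAt.contDiffWithinAt
  rw [fabc_eq a α β γ ha]
  have hB : ContDiffAt ℝ k
      (fun p : ℝ × ℝ => pw 1 (a ^ (α / γ)) (α / γ) p.1 + pw 1 1 (β / γ) p.2) p :=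
    (((pw_contDiff k 1 (a ^ (α / γ)) (α / γ) hqa).comp contDiff_fst).add
      ((pw_contDiff k 1 1 (β / γ) hqb).comp contDiff_snd)).contDiffAt
  have hp' : p ≠ ((0 : ℝ), (0 : ℝ)) := by simpa using hp
  have hpos : 0 < pw 1 (a ^ (α / γ)) (α / γ) p.1 + pw 1 1 (β / γ) p.2 := by
    rcases eq_or_ne p.1 0 with h1 | h1
    · have h2 : p.2 ≠ 0 := by
        intro h2
        exact hp' (Prod.ext h1 h2)
      have := pw_pos one_pos one_pos (c₁ := 1) (c₂ := 1) (q := β / γ) h2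
      have := pw_nonneg (c₁ := (1:ℝ)) (c₂ := a ^ (α / γ)) (q := α / γ) zero_le_one
        (Real.rpow_nonneg ha.le _) p.1
      linarith
    · have := pw_pos one_pos (Real.rpow_pos_of_pos ha (α / γ)) (q := α / γ) h1
      have := pw_nonneg (c₁ := (1:ℝ)) (c₂ := (1:ℝ)) (q := β / γ) zero_le_one zero_le_one p.2
      linarith
  exact hB.rpow_const_of_ne hpos.ne'

noncomputable def Ck (q γ : ℝ) : ℕ → ℕ → ℝ
  | 0, m => if m = 0 then 1 else 0
  | n + 1, m =>
      (if m = 0 then 0 else q * (γ - ((m : ℝ) - 1)) * Ck q γ n (m - 1)) +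
        ((m : ℝ) * q - (n : ℝ)) * Ck q γ n m

lemma Ck_gt (q γ : ℝ) : ∀ n m : ℕ, n < m → Ck q γ n m = 0 := by
  intro n
  induction n with
  | zero => intro m hm; simp [Ck, show m ≠ 0 by omega]
  | succ n ih =>
    intro m hm
    have h0 : m ≠ 0 := by omega
    simp only [Ck, if_neg h0]
    rw [ih (m - 1) (by omega), ih m (by omega)]
    ring

lemma Ck_zero (q γ : ℝ) : ∀ n : ℕ, Ck q γ (n + 1) 0 = 0 := by
  intro n
  induction n with
  | zero => simp [Ck]
  | succ n ih => simp [Ck] at ih ⊢; simp [ih]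

lemma term_hasDerivAt (q γ c : ℝ) (hc : 0 ≤ c) {x : ℝ} (hx : 0 < x) (A r s : ℝ) :
    HasDerivAt (fun x : ℝ => A * (x ^ q + c) ^ r * x ^ s)
      (A * (q * r * (x ^ q + c) ^ (r - 1) * x ^ ((q - 1) + s) +
        s * (x ^ q + c) ^ r * x ^ (s - 1))) x := by
  have hb : 0 < x ^ q + c := add_pos_of_pos_of_nonneg (Real.rpow_pos_of_pos hx q) hc
  have h1 : HasDerivAt (fun x : ℝ => x ^ q + c) (q * x ^ (q - 1)) x :=
    (Real.hasDerivAt_rpow_const (Or.inl hx.ne')).add_const c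
  have h2 : HasDerivAt (fun t : ℝ => t ^ r) (r * (x ^ q + c) ^ (r - 1)) (x ^ q + c) :=
    Real.hasDerivAt_rpow_const (Or.inl hb.ne')
  have h3 : HasDerivAt (fun x : ℝ => (x ^ q + c) ^ r)
      (r * (x ^ q + c) ^ (r - 1) * (q * x ^ (q - 1))) x := by have := h2.comp x h1; exact this
  have h4 : HasDerivAt (fun x : ℝ => x ^ s) (s * x ^ (s - 1)) x :=
    Real.hasDerivAt_rpow_const (Or.inl hx.ne')
  have h5 : HasDerivAt (fun y : ℝ => A * ((y ^ q + c) ^ r * y ^ s))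
      (A * (r * (x ^ q + c) ^ (r - 1) * (q * x ^ (q - 1)) * x ^ s + (x ^ q + c) ^ r * (s * x ^ (s - 1)))) x :=
    (h3.fun_mul h4).const_mul A
  rw [show (fun x : ℝ => A * (x ^ q + c) ^ r * x ^ s) =
    fun y => A * ((y ^ q + c) ^ r * y ^ s) from funext fun y => by ring]
  convert h5 using 1
  rw [Real.rpow_add hx (q - 1) s]
  ring

lemma iter_formula (q γ c : ℝ) (hc : 0 ≤ c) :
    ∀ (n : ℕ) (x : ℝ), 0 < x → iteratedDeriv n (fun x : ℝ => (x ^ q + c) ^ γ) x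
      = ∑ m ∈ Finset.range (n + 1),
          Ck q γ n m * (x ^ q + c) ^ (γ - m) * x ^ ((m : ℝ) * q - n) := by
  intro n
  induction n with
  | zero =>
    intro x hx
    simp [iteratedDeriv_zero, Ck, Real.rpow_zero]
  | succ n ih =>
    intro x hx
    rw [iteratedDeriv_succ]
    have hev : iteratedDeriv n (fun x : ℝ => (x ^ q + c) ^ γ) =ᶠ[nhds x]
        (fun x : ℝ => ∑ m ∈ Finset.range (n + 1),
          Ck q γ n m * (x ^ q + c) ^ (γ - m) * x ^ ((m : ℝ) * q - n)) := by
      filter_upwards [eventually_gt_nhds hx] with y hy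
      exact ih y hy
    rw [hev.deriv_eq]
    have hD : HasDerivAt (fun x : ℝ => ∑ m ∈ Finset.range (n + 1),
        Ck q γ n m * (x ^ q + c) ^ (γ - m) * x ^ ((m : ℝ) * q - n))
        (∑ m ∈ Finset.range (n + 1),
          Ck q γ n m * (q * (γ - m) * (x ^ q + c) ^ ((γ - m) - 1) * x ^ ((q - 1) + ((m : ℝ) * q - n)) +
            ((m : ℝ) * q - n) * (x ^ q + c) ^ (γ - m) * x ^ (((m : ℝ) * q - n) - 1))) x :=
      HasDerivAt.fun_sum fun m _ => term_hasDerivAt q γ c hc hx _ _ _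
    rw [hD.deriv]
    -- canonical forms
    have key :
        (∑ m ∈ Finset.range (n + 1),
          Ck q γ n m * (q * (γ - m) * (x ^ q + c) ^ ((γ - m) - 1) * x ^ ((q - 1) + ((m : ℝ) * q - n)) +
            ((m : ℝ) * q - n) * (x ^ q + c) ^ (γ - m) * x ^ (((m : ℝ) * q - n) - 1)))
        = (∑ m ∈ Finset.range (n + 1),
            q * (γ - (m : ℝ)) * Ck q γ n m *
              ((x ^ q + c) ^ (γ - ((m : ℝ) + 1)) * x ^ (((m : ℝ) + 1) * q - ((n : ℝ) + 1))))
          + (∑ m ∈ Finset.range (n + 1),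
            ((m : ℝ) * q - n) * Ck q γ n m *
              ((x ^ q + c) ^ (γ - (m : ℝ)) * x ^ ((m : ℝ) * q - ((n : ℝ) + 1)))) := by
      rw [← Finset.sum_add_distrib]
      apply Finset.sum_congr rfl
      intro m _
      rw [show (γ - (m : ℝ)) - 1 = γ - ((m : ℝ) + 1) by ring,
        show (q - 1) + ((m : ℝ) * q - n) = ((m : ℝ) + 1) * q - ((n : ℝ) + 1) by ring,
        show ((m : ℝ) * q - n) - 1 = (m : ℝ) * q - ((n : ℝ) + 1) by ring]
      ring
    rw [key]
    -- now handle RHS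
    have hR :
        (∑ m ∈ Finset.range (n + 1 + 1),
          Ck q γ (n + 1) m * (x ^ q + c) ^ (γ - m) * x ^ ((m : ℝ) * q - (n + 1 : ℕ)))
        = (∑ m ∈ Finset.range (n + 1 + 1),
            (if m = 0 then 0 else q * (γ - ((m : ℝ) - 1)) * Ck q γ n (m - 1)) *
              ((x ^ q + c) ^ (γ - (m : ℝ)) * x ^ ((m : ℝ) * q - ((n : ℝ) + 1))))
          + (∑ m ∈ Finset.range (n + 1 + 1),
            ((m : ℝ) * q - n) * Ck q γ n m *
              ((x ^ q + c) ^ (γ - (m : ℝ)) * x ^ ((m : ℝ) * q - ((n : ℝ) + 1)))) := by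
      rw [← Finset.sum_add_distrib]
      apply Finset.sum_congr rfl
      intro m _
      simp only [Ck]
      push_cast
      ring
    rw [hR]
    congr 1
    · -- shift index
      conv_rhs => rw [Finset.sum_range_succ']
      simp only [Nat.succ_ne_zero, if_false, Nat.add_sub_cancel, eq_self_iff_true, if_true, zero_mul, add_zero]
      apply Finset.sum_congr rfl
      intro m _
      push_cast
      ring_nf
    · -- extra top term vanishes
      conv_rhs => rw [Finset.sum_range_succ]
      rw [Ck_gt q γ n (n + 1) (by omega)]
      simp

lemma iteratedDeriv_congr_pos (f g : ℝ → ℝ) (h : ∀ x, 0 < x → f x = g x) :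
    ∀ (n : ℕ) (x : ℝ), 0 < x → iteratedDeriv n f x = iteratedDeriv n g x := by
  intro n
  induction n with
  | zero => intro x hx; simpa [iteratedDeriv_zero] using h x hx
  | succ n ih =>
    intro x hx
    rw [iteratedDeriv_succ, iteratedDeriv_succ]
    apply Filter.EventuallyEq.deriv_eq
    filter_upwards [eventually_gt_nhds hx] with y hy
    exact ih y hy

theorem stmt18 (a : ℝ) (ha : 0 < a) (α β γ : ℝ) (hα : 0 < α) (hβ : 0 < β)
    (k : ℕ) (hk : 0 < k) (hγ0 : 0 < γ) (hγ : γ < min (α / k) (min (β / k) 1)) :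
    ContDiffOn ℝ k (fabc a α β γ) ({((0 : ℝ), (0 : ℝ))}ᶜ) ∧
    ∃ C : ℕ → ℝ, ∀ x : ℝ, 0 < x → ∀ y : ℝ,
      iteratedDeriv k (fun x => fabc a α β γ (x, y)) x =
        ∑ m ∈ Finset.Icc 1 k,
          C m * (x ^ (α / γ) + |y| ^ (β / γ)) ^ (γ - m) * x ^ (m * (α / γ) - k) := by
  have hk' : (0 : ℝ) < k := by exact_mod_cast hk
  have hγa : γ < α / k := lt_of_lt_of_le hγ (min_le_left _ _)
  have hγb : γ < β / k := lt_of_lt_of_le hγ ((min_le_right _ _).trans (min_le_left _ _))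
  have hqa : (k : ℝ) < α / γ := by
    rw [lt_div_iff₀ hγ0]; rw [lt_div_iff₀ hk'] at hγa; linarith
  have hqb : (k : ℝ) < β / γ := by
    rw [lt_div_iff₀ hγ0]; rw [lt_div_iff₀ hk'] at hγb; linarith
  refine ⟨part1 a α β γ ha k hqa hqb, Ck (α / γ) γ k, ?_⟩
  intro x hx y
  have hc : (0 : ℝ) ≤ |y| ^ (β / γ) := Real.rpow_nonneg (abs_nonneg y) _
  have hcongr := iteratedDeriv_congr_pos (fun x => fabc a α β γ (x, y))
    (fun x : ℝ => (x ^ (α / γ) + |y| ^ (β / γ)) ^ γ)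
    (fun x hx => by simp [fabc, hx.le]) k x hx
  rw [hcongr, iter_formula (α / γ) γ _ hc k x hx]
  symm
  apply Finset.sum_subset
  · intro m hm
    simp only [Finset.mem_Icc] at hm
    simp only [Finset.mem_range]
    omega
  · intro m hm hnm
    simp only [Finset.mem_range] at hm
    simp only [Finset.mem_Icc] at hnm
    have hm0 : m = 0 := by omega
    subst hm0
    obtain ⟨j, rfl⟩ : ∃ j, k = j + 1 := ⟨k - 1, by omega⟩
    rw [Ck_zero]
    ring
end
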